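/- arXiv:1402.6812 — 3 statements merged into one kernel-verified Lean document; each statement's English description precedes it below -/
import Mathlib

section
/- The map h sending x = (x₁,x₂,x₃,x₄) ∈ ℝ⁴ to the 4×4 real matrix with rows (x₁, −αx₂, −βx₃, αβx₄), (x₂, x₁, −βx₄, −βx₃), (x₃, −αx₄, x₁, −αx₂), (x₄, x₃, x₂, x₁) is injective, ℝ-linear, and satisfies h(x·y) = h(x)h(y) for all x, y ∈ ℝ⁴; i.e. h is an algebra isomorphism of the generalized bicomplex algebra onto its image in the 4×4 real matrices. -/
/-- The generalized bicomplex product on ℝ⁴ with parameters α, β. -/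
def gbmul (α β : ℝ) (x y : ℝ × ℝ × ℝ × ℝ) : ℝ × ℝ × ℝ × ℝ :=
  (x.1 * y.1 - α * x.2.1 * y.2.1 - β * x.2.2.1 * y.2.2.1 + α * β * x.2.2.2 * y.2.2.2,
   x.1 * y.2.1 + x.2.1 * y.1 - β * x.2.2.1 * y.2.2.2 - β * x.2.2.2 * y.2.2.1,
   x.1 * y.2.2.1 + x.2.2.1 * y.1 - α * x.2.1 * y.2.2.2 - α * x.2.2.2 * y.2.1,
   x.1 * y.2.2.2 + x.2.2.2 * y.1 + x.2.1 * y.2.2.1 + x.2.2.1 * y.2.1)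

/-- The matrix representation of a generalized bicomplex number. -/
def gbMatrix (α β : ℝ) (x : ℝ × ℝ × ℝ × ℝ) : Matrix (Fin 4) (Fin 4) ℝ :=
  !![x.1, -α * x.2.1, -β * x.2.2.1, α * β * x.2.2.2;
     x.2.1, x.1, -β * x.2.2.2, -β * x.2.2.1;
     x.2.2.1, -α * x.2.2.2, x.1, -α * x.2.1;
     x.2.2.2, x.2.2.1, x.2.1, x.1]

/-- The map `h = gbMatrix α β` is injective, ℝ-linear and multiplicative with
respect to the generalized bicomplex product, i.e. an algebra isomorphism of the
generalized bicomplex algebra onto its image in the 4×4 real matrices. -/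
theorem gbMatrix_injective_linear_mul (α β : ℝ) :
    Function.Injective (gbMatrix α β) ∧
    (∀ (c : ℝ) (x y : ℝ × ℝ × ℝ × ℝ),
        gbMatrix α β (c • x + y) = c • gbMatrix α β x + gbMatrix α β y) ∧
    (∀ x y : ℝ × ℝ × ℝ × ℝ,
        gbMatrix α β (gbmul α β x y) = gbMatrix α β x * gbMatrix α β y) := by

  refine ⟨?_, ?_, ?_⟩
  · intro x y h
    have h0 := congrFun (congrFun h 0) 0
    have h1 := congrFun (congrFun h 1) 0
    have h2 := congrFun (congrFun h 2) 0
    have h3 := congrFun (congrFun h 3) 0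
    simp only [gbMatrix, Matrix.cons_val', Matrix.cons_val_zero, Matrix.empty_val',
      Matrix.cons_val_fin_one, Matrix.cons_val_one, Matrix.head_cons, Matrix.head_fin_const,
      Matrix.cons_val_two, Matrix.tail_cons, Matrix.cons_val_three] at h0 h1 h2 h3
    obtain ⟨a,b,c,d⟩ := x; obtain ⟨a',b',c',d'⟩ := y
    simp_all
  · intro c x y
    ext i j
    fin_cases i <;> fin_cases j <;>
      simp [gbMatrix, Matrix.add_apply, Matrix.smul_apply] <;> ring
  · intro x y
    ext i j
    fin_cases i <;> fin_cases j <;>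
      simp [gbMatrix, gbmul, Matrix.mul_apply, Fin.sum_univ_four] <;> ring
end

section
/- If x = (x₁,x₂,x₃,x₄) and y = (y₁,y₂,y₃,y₄) in ℝ⁴ satisfy x₁x₃ + αx₂x₄ = 0 and y₁y₃ + αy₂y₄ = 0, then their generalized bicomplex product z = x·y also satisfies z₁z₃ + αz₂z₄ = 0, and moreover q_{t_i}(x·y) = q_{t_i}(x)·q_{t_i}(y), where q_{t_i}(x) = x₁² + αx₂² − βx₃² − αβx₄². -/
/-- The quadratic form associated with the conjugation `t_i`. -/
def qTi (α β : ℝ) (x : ℝ × ℝ × ℝ × ℝ) : ℝ :=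
  x.1 ^ 2 + α * x.2.1 ^ 2 - β * x.2.2.1 ^ 2 - α * β * x.2.2.2 ^ 2

/-- If `x` and `y` satisfy the hyperquadric equation `x₁x₃ + αx₂x₄ = 0`, then so
does their generalized bicomplex product, and the quadratic form `qTi` is
multiplicative on such elements. -/
theorem hyperquadric_closed_and_qTi_mul (α β : ℝ) (x y : ℝ × ℝ × ℝ × ℝ)
    (hx : x.1 * x.2.2.1 + α * x.2.1 * x.2.2.2 = 0)
    (hy : y.1 * y.2.2.1 + α * y.2.1 * y.2.2.2 = 0) :
    (gbmul α β x y).1 * (gbmul α β x y).2.2.1 +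
      α * (gbmul α β x y).2.1 * (gbmul α β x y).2.2.2 = 0 ∧
    qTi α β (gbmul α β x y) = qTi α β x * qTi α β y := by
  obtain ⟨a, b, c, d⟩ := x
  obtain ⟨e, f, g, h⟩ := y
  simp only [gbmul, qTi] at *
  refine ⟨?_, ?_⟩
  · linear_combination (e ^ 2 + α * f ^ 2 - β * g ^ 2 - α * β * h ^ 2) * hx +
      (a ^ 2 + α * b ^ 2 - β * c ^ 2 - α * β * d ^ 2) * hy
  · linear_combination (-4 * α * β * f * h - 4 * β * e * g) * hx
end

section
/- The set M_{t_i} = { x ∈ ℝ⁴ : x₁x₃ + αx₂x₄ = 0 and q_{t_i}(x) ≠ 0 } is a group under the generalized bicomplex product: it contains the identity e = (1,0,0,0), it is closed under the product, and every x ∈ M_{t_i} has inverse x⁻¹ = (1/q_{t_i}(x))·(x₁, −x₂, x₃, −x₄), which again lies in M_{t_i}. -/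
/-!
The conjugation `x̄ = (x₁, -x₂, x₃, -x₄)` is an automorphism of the commutative algebra
`(ℝ⁴, gbmul)`, and `x x̄ = (q(x), 0, 2 c(x), 0)` with `c(x) = x₁x₃ + αx₂x₄`. So
`x ↦ q(x) + 2 c(x) j` is multiplicative into `ℝ[j]/(j² + β)`:
`q(xy) = q(x) q(y) - 4β c(x) c(y)` and `c(xy) = q(x) c(y) + q(y) c(x)`. On the hyperquadric
`c = 0`, so it is closed under the product, and `q(x)⁻¹ x̄` inverts `x`.
-/

def conjTi (x : ℝ × ℝ × ℝ × ℝ) : ℝ × ℝ × ℝ × ℝ := (x.1, -x.2.1, x.2.2.1, -x.2.2.2)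

def crossTi (α : ℝ) (x : ℝ × ℝ × ℝ × ℝ) : ℝ := x.1 * x.2.2.1 + α * x.2.1 * x.2.2.2

def hyperquadric (α β : ℝ) : Set (ℝ × ℝ × ℝ × ℝ) := {x | crossTi α x = 0 ∧ qTi α β x ≠ 0}

section Algebra

variable (α β : ℝ) (x y : ℝ × ℝ × ℝ × ℝ)

theorem gbmul_comm : gbmul α β x y = gbmul α β y x := by
  simp only [gbmul, Prod.mk.injEq]
  refine ⟨?_, ?_, ?_, ?_⟩ <;> ring

theorem gbmul_smul_right (c : ℝ) : gbmul α β x (c • y) = c • gbmul α β x y := by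
  simp only [gbmul, Prod.smul_fst, Prod.smul_snd, Prod.smul_mk, smul_eq_mul, Prod.mk.injEq]
  refine ⟨?_, ?_, ?_, ?_⟩ <;> ring

theorem gbmul_conjTi_self : gbmul α β x (conjTi x) = (qTi α β x, 0, 2 * crossTi α x, 0) := by
  simp only [gbmul, conjTi, qTi, crossTi, Prod.mk.injEq]
  refine ⟨?_, ?_, ?_, ?_⟩ <;> ring

theorem qTi_gbmul :
    qTi α β (gbmul α β x y) = qTi α β x * qTi α β y - 4 * β * crossTi α x * crossTi α y := by
  simp only [gbmul, qTi, crossTi]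
  ring

theorem crossTi_gbmul :
    crossTi α (gbmul α β x y) = qTi α β x * crossTi α y + qTi α β y * crossTi α x := by
  simp only [gbmul, qTi, crossTi]
  ring

theorem qTi_smul_conjTi (c : ℝ) : qTi α β (c • conjTi x) = c ^ 2 * qTi α β x := by
  simp only [qTi, conjTi, Prod.smul_mk, smul_eq_mul]
  ring

theorem crossTi_smul_conjTi (c : ℝ) : crossTi α (c • conjTi x) = c ^ 2 * crossTi α x := by
  simp only [crossTi, conjTi, Prod.smul_mk, smul_eq_mul]
  ring

end Algebra

section Hyperquadric

variable {α β : ℝ} {x y : ℝ × ℝ × ℝ × ℝ}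

theorem one_mem_hyperquadric (α β : ℝ) : ((1, 0, 0, 0) : ℝ × ℝ × ℝ × ℝ) ∈ hyperquadric α β := by
  simp [hyperquadric, crossTi, qTi]

theorem gbmul_mem_hyperquadric (hx : x ∈ hyperquadric α β) (hy : y ∈ hyperquadric α β) :
    gbmul α β x y ∈ hyperquadric α β := by
  refine ⟨?_, ?_⟩
  · rw [crossTi_gbmul, hx.1, hy.1]
    ring
  · rw [qTi_gbmul, hx.1]
    simpa using mul_ne_zero hx.2 hy.2

theorem inv_mem_hyperquadric (hx : x ∈ hyperquadric α β) :
    (qTi α β x)⁻¹ • conjTi x ∈ hyperquadric α β := by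
  refine ⟨?_, ?_⟩
  · rw [crossTi_smul_conjTi, hx.1, mul_zero]
  · rw [qTi_smul_conjTi]
    exact mul_ne_zero (pow_ne_zero 2 (inv_ne_zero hx.2)) hx.2

theorem gbmul_inv (hx : x ∈ hyperquadric α β) :
    gbmul α β x ((qTi α β x)⁻¹ • conjTi x) = (1, 0, 0, 0) := by
  rw [gbmul_smul_right, gbmul_conjTi_self, hx.1]
  simp [hx.2]

theorem inv_gbmul (hx : x ∈ hyperquadric α β) :
    gbmul α β ((qTi α β x)⁻¹ • conjTi x) x = (1, 0, 0, 0) := by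
  rw [gbmul_comm, gbmul_inv hx]

end Hyperquadric

/-- The hyperquadric is a group under the generalized bicomplex product: it
contains the identity `(1,0,0,0)`, is closed under the product, and every
element has a two-sided inverse (again lying in the hyperquadric) given by the
scaled conjugate. -/
theorem hyperquadric_group (α β : ℝ) :
    let M : Set (ℝ × ℝ × ℝ × ℝ) :=
      {x | x.1 * x.2.2.1 + α * x.2.1 * x.2.2.2 = 0 ∧ qTi α β x ≠ 0}
    let e : ℝ × ℝ × ℝ × ℝ := (1, 0, 0, 0)
    e ∈ M ∧
    (∀ x ∈ M, ∀ y ∈ M, gbmul α β x y ∈ M) ∧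
    (∀ x ∈ M,
      ((qTi α β x)⁻¹ • ((x.1, -x.2.1, x.2.2.1, -x.2.2.2) : ℝ × ℝ × ℝ × ℝ)) ∈ M ∧
      gbmul α β x ((qTi α β x)⁻¹ • ((x.1, -x.2.1, x.2.2.1, -x.2.2.2) : ℝ × ℝ × ℝ × ℝ)) = e ∧
      gbmul α β ((qTi α β x)⁻¹ • ((x.1, -x.2.1, x.2.2.1, -x.2.2.2) : ℝ × ℝ × ℝ × ℝ)) x = e) :=
  ⟨one_mem_hyperquadric α β, fun _ hx _ hy => gbmul_mem_hyperquadric hx hy,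
    fun _ hx => ⟨inv_mem_hyperquadric hx, gbmul_inv hx, inv_gbmul hx⟩⟩
end
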